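/- arXiv:1710.00456 — 2 statements merged into one kernel-verified Lean document; each statement's English description precedes it below -/
import Mathlib

section
/- Let H be a norm on ℝ^N (C¹ away from 0, with C¹ dual norm H₀). Let v be an H₀-radially symmetric C²_{H₀}-smooth function, i.e. v(x) = v♯(H₀(x)) where v*(x) := v♯(|x|) is C² on ℝ^N. Then for all x ∈ ℝ^N \ {0}, the gradient satisfies H(∇v(x))·∇_ξH(∇v(x)) = (∂_r v♯)(H₀(x)) · x / H₀(x). -/
/-
With `r = dualNorm H x` and `ξ₀ = ∇ (dualNorm H) x`, sublinearity of the dual norm makes `ξ₀` a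
subgradient: `⟪ξ₀, x⟫ = r` and `⟪ξ₀, y⟫ ≤ dualNorm H y` for all `y`. Separating from the unit ball
of `H` (Hahn–Banach) turns the latter into `H ξ₀ ≤ 1`, so `H ξ₀ = 1` and `ξ₀` maximizes
`⟪x, ξ⟫ - r * H ξ`, whence `r • ∇ H ξ₀ = x`. By the chain rule `∇ v x = v♯'(r) • ξ₀`, and
`ξ ↦ H ξ • ∇ H ξ` is homogeneous of degree one, so the left-hand side is `(v♯'(r) / r) • x`.
-/

open MeasureTheory Real

noncomputable def dualNorm {N : ℕ} (H : EuclideanSpace ℝ (Fin N) → ℝ)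
    (x : EuclideanSpace ℝ (Fin N)) : ℝ :=
  ⨆ ξ : {ξ : EuclideanSpace ℝ (Fin N) // ξ ≠ 0}, (inner ℝ x ξ.1 : ℝ) / H ξ.1

noncomputable def divg {N : ℕ}
    (F : EuclideanSpace ℝ (Fin N) → EuclideanSpace ℝ (Fin N))
    (x : EuclideanSpace ℝ (Fin N)) : ℝ :=
  ∑ i : Fin N, fderiv ℝ F x (EuclideanSpace.single i 1) i

noncomputable def finslerLap {N : ℕ} (H u : EuclideanSpace ℝ (Fin N) → ℝ)
    (x : EuclideanSpace ℝ (Fin N)) : ℝ :=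
  divg (fun y => H (gradient u y) • gradient H (gradient u y)) x

open InnerProductSpace Filter Topology
open scoped Gradient RealInnerProductSpace

section Derivative

variable {E : Type*} [NormedAddCommGroup E] [NormedSpace ℝ E] {f : E → ℝ} {x : E}

lemma fderiv_apply_le_of_forall_pos_le (hf : DifferentiableAt ℝ f x) {y : E} {c : ℝ}
    (h : ∀ t : ℝ, 0 < t → f (x + t • y) ≤ f x + t * c) : fderiv ℝ f x y ≤ c := by
  have hline : HasDerivAt (fun t : ℝ => f (x + t • y)) (fderiv ℝ f x y) 0 := by
    have hf' : HasFDerivAt f (fderiv ℝ f x) (x + (0 : ℝ) • y) := by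
      simpa using hf.hasFDerivAt
    exact hf'.comp_hasDerivAt 0 (by simpa using ((hasDerivAt_id (0 : ℝ)).smul_const y).const_add x)
  have hright : 𝓝[>] (0 : ℝ) ≤ 𝓝[≠] 0 := nhdsWithin_mono 0 fun t ht => ne_of_gt ht
  refine le_of_tendsto ((hasDerivAt_iff_tendsto_slope.mp hline).mono_left hright) ?_
  filter_upwards [self_mem_nhdsWithin] with t (ht : 0 < t)
  rw [slope_def_field, div_le_iff₀ (by simpa using ht)]
  simpa [add_comm, mul_comm] using h t ht

lemma fderiv_apply_self_of_forall_pos_smul (hf : DifferentiableAt ℝ f x)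
    (h : ∀ t : ℝ, 0 < t → f (t • x) = t * f x) : fderiv ℝ f x x = f x := by
  have hray : HasDerivAt (fun t : ℝ => f (t • x)) (fderiv ℝ f x x) 1 := by
    have hf' : HasFDerivAt f (fderiv ℝ f x) ((1 : ℝ) • x) := by simpa using hf.hasFDerivAt
    exact hf'.comp_hasDerivAt 1 (by simpa using (hasDerivAt_id (1 : ℝ)).smul_const x)
  refine hray.unique (((hasDerivAt_id (1 : ℝ)).mul_const (f x)).congr_of_eventuallyEq ?_)
    |>.trans (one_mul _)
  filter_upwards [Ioi_mem_nhds one_pos] with t ht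
  exact h t ht

end Derivative

section Gradient

variable {E : Type*} [NormedAddCommGroup E] [InnerProductSpace ℝ E] [CompleteSpace E]

lemma HasDerivAt.comp_hasGradientAt {f : E → ℝ} {g : ℝ → ℝ} {f' x : E} {g' : ℝ}
    (hg : HasDerivAt g g' (f x)) (hf : HasGradientAt f f' x) :
    HasGradientAt (g ∘ f) (g' • f') x := by
  rw [hasGradientAt_iff_hasFDerivAt, map_smul]
  exact hg.comp_hasFDerivAt x (hasGradientAt_iff_hasFDerivAt.mp hf)

lemma smul_eq_of_hasGradientAt_of_inner_le {f : E → ℝ} {g x ξ₀ : E} {r : ℝ}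
    (hf : HasGradientAt f g ξ₀) (hle : ∀ ξ, ⟪x, ξ⟫ ≤ r * f ξ) (heq : ⟪x, ξ₀⟫ = r * f ξ₀) :
    r • g = x := by
  have hmin : IsLocalMin (fun ξ => r * f ξ - toDual ℝ E x ξ) ξ₀ :=
    Eventually.of_forall fun ξ => by
      simp only [toDual_apply_apply, heq, sub_self, sub_nonneg]
      exact hle ξ
  have hderiv :=
    (hasGradientAt_iff_hasFDerivAt.mp hf).const_mul r |>.sub (toDual ℝ E x).hasFDerivAt
  have hzero : toDual ℝ E (r • g - x) = 0 := by
    rw [map_sub, map_smul]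
    exact hmin.hasFDerivAt_eq_zero hderiv
  exact sub_eq_zero.mp ((map_eq_zero_iff _ (toDual ℝ E).injective).mp hzero)

variable {H : E → ℝ}

lemma hasGradientAt_smul_of_abs_homogeneous (hhom : ∀ (a : ℝ) ξ, H (a • ξ) = |a| * H ξ)
    {g ξ : E} (hH : HasGradientAt H g ξ) {c : ℝ} (hc : c ≠ 0) :
    HasGradientAt H ((|c| / c) • g) (c • ξ) := by
  have hH' : HasFDerivAt H (toDual ℝ E g) (c⁻¹ • c • ξ) := by
    rw [smul_smul, inv_mul_cancel₀ hc, one_smul]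
    exact hasGradientAt_iff_hasFDerivAt.mp hH
  have hrescaled :=
    (hH'.comp (c • ξ) ((c⁻¹ • ContinuousLinearMap.id ℝ E).hasFDerivAt)).const_mul |c|
  have hH_eq (y : E) : H y = |c| * H (c⁻¹ • y) := by
    rw [hhom, abs_inv, ← mul_assoc, mul_inv_cancel₀ (abs_ne_zero.mpr hc), one_mul]
  rw [hasGradientAt_iff_hasFDerivAt]
  refine (hrescaled.congr_of_eventuallyEq (.of_forall hH_eq)).congr_fderiv ?_
  ext y
  simp only [ContinuousLinearMap.comp_smulₛₗ, map_inv₀, Real.ringHom_apply,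
    ContinuousLinearMap.comp_id, smul_apply, toDual_apply_apply, smul_eq_mul, map_smul]
  ring

lemma apply_smul_gradient_smul (hhom : ∀ (a : ℝ) ξ, H (a • ξ) = |a| * H ξ) {ξ : E}
    (hH : DifferentiableAt ℝ H ξ) (c : ℝ) :
    H (c • ξ) • ∇ H (c • ξ) = c • (H ξ • ∇ H ξ) := by
  rcases eq_or_ne c 0 with rfl | hc
  · simp [show H 0 = 0 by simpa using hhom 0 0]
  rw [(hasGradientAt_smul_of_abs_homogeneous hhom hH.hasGradientAt hc).gradient, hhom,
    smul_smul, smul_smul]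
  congr 1
  field_simp
  rw [sq_abs]
  ring

end Gradient

section NormedSpace

variable {E : Type*} [NormedAddCommGroup E] [NormedSpace ℝ E]

lemma differentiableAt_of_differentiable_comp_norm [Nontrivial E] {f : ℝ → ℝ}
    (hf : Differentiable ℝ (fun x : E => f ‖x‖)) {r : ℝ} (hr : 0 < r) :
    DifferentiableAt ℝ f r := by
  obtain ⟨e, he⟩ := exists_norm_eq E zero_le_one
  have hray : DifferentiableAt ℝ (fun t : ℝ => f ‖t • e‖) r :=
    (hf _).comp r (differentiableAt_id.smul_const e)
  refine hray.congr_of_eventuallyEq ?_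
  filter_upwards [Ioi_mem_nhds hr] with t (ht : 0 < t)
  rw [norm_smul, he, mul_one, Real.norm_eq_abs, abs_of_pos ht]

lemma exists_pos_mul_norm_le [FiniteDimensional ℝ E] [Nontrivial E] {H : E → ℝ}
    (hcont : Continuous H) (hpos : ∀ ξ, ξ ≠ 0 → 0 < H ξ)
    (hhom : ∀ (a : ℝ) ξ, H (a • ξ) = |a| * H ξ) :
    ∃ m, 0 < m ∧ ∀ ξ, m * ‖ξ‖ ≤ H ξ := by
  obtain ⟨ξ₀, hξ₀, hmin⟩ := (isCompact_sphere (0 : E) 1).exists_isMinOn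
    (NormedSpace.sphere_nonempty.mpr zero_le_one) hcont.continuousOn
  have hξ₀_ne : ξ₀ ≠ 0 := ne_zero_of_mem_unit_sphere ⟨ξ₀, hξ₀⟩
  refine ⟨H ξ₀, hpos ξ₀ hξ₀_ne, fun ξ => ?_⟩
  rcases eq_or_ne ξ 0 with rfl | hξ
  · simpa using (hhom 0 0).ge
  have hnorm : 0 < ‖ξ‖ := norm_pos_iff.mpr hξ
  have hunit : ‖ξ‖⁻¹ • ξ ∈ Metric.sphere (0 : E) 1 := by
    simp [norm_smul, inv_mul_cancel₀ hnorm.ne']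
  have := hmin hunit
  simp only [Set.mem_ofPred_eq, hhom, abs_inv, abs_norm] at this
  rwa [le_inv_mul_iff₀ hnorm, mul_comm] at this

end NormedSpace

lemma pos_of_mul_norm_le {E : Type*} [NormedAddCommGroup E] {H : E → ℝ} {m : ℝ} (hm : 0 < m)
    (hmle : ∀ ξ, m * ‖ξ‖ ≤ H ξ) {ξ : E} (hξ : ξ ≠ 0) : 0 < H ξ :=
  (mul_pos hm (norm_pos_iff.mpr hξ)).trans_le (hmle ξ)

section DualNorm

variable {N : ℕ} {H : EuclideanSpace ℝ (Fin N) → ℝ} {m : ℝ}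

local notation "𝔼" => EuclideanSpace ℝ (Fin N)

lemma dualNorm_smul_of_nonneg {a : ℝ} (ha : 0 ≤ a) (y : 𝔼) :
    dualNorm H (a • y) = a * dualNorm H y := by
  simp only [dualNorm, real_inner_smul_left, mul_div_assoc, Real.mul_iSup_of_nonneg ha]

lemma bddAbove_range_inner_div (hm : 0 < m) (hmle : ∀ ξ, m * ‖ξ‖ ≤ H ξ) (y : 𝔼) :
    BddAbove (Set.range fun ξ : {ξ : 𝔼 // ξ ≠ 0} => ⟪y, ξ.1⟫ / H ξ.1) := by
  refine ⟨‖y‖ / m, ?_⟩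
  rintro _ ⟨⟨ξ, hξ⟩, rfl⟩
  have hHξ : 0 < H ξ := pos_of_mul_norm_le hm hmle hξ
  rw [div_le_div_iff₀ hHξ hm]
  calc ⟪y, ξ⟫ * m ≤ ‖y‖ * ‖ξ‖ * m := by gcongr; exact real_inner_le_norm y ξ
    _ = ‖y‖ * (m * ‖ξ‖) := by ring
    _ ≤ ‖y‖ * H ξ := by gcongr; exact hmle ξ

lemma inner_div_le_dualNorm (hm : 0 < m) (hmle : ∀ ξ, m * ‖ξ‖ ≤ H ξ) (y : 𝔼) {ξ : 𝔼}
    (hξ : ξ ≠ 0) : ⟪y, ξ⟫ / H ξ ≤ dualNorm H y :=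
  le_ciSup (bddAbove_range_inner_div hm hmle y) ⟨ξ, hξ⟩

lemma dualNorm_le [Nontrivial 𝔼] {y : 𝔼} {c : ℝ} (h : ∀ ξ, ξ ≠ 0 → ⟪y, ξ⟫ / H ξ ≤ c) :
    dualNorm H y ≤ c :=
  have : Nonempty {ξ : 𝔼 // ξ ≠ 0} := nonempty_subtype.mpr (exists_ne 0)
  ciSup_le fun ξ => h ξ.1 ξ.2

lemma inner_le_dualNorm_mul (hhom : ∀ (a : ℝ) ξ, H (a • ξ) = |a| * H ξ) (hm : 0 < m)
    (hmle : ∀ ξ, m * ‖ξ‖ ≤ H ξ) (y ξ : 𝔼) : ⟪y, ξ⟫ ≤ dualNorm H y * H ξ := by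
  rcases eq_or_ne ξ 0 with rfl | hξ
  · simp [show H 0 = 0 by simpa using hhom 0 0]
  rw [← div_le_iff₀ (pos_of_mul_norm_le hm hmle hξ)]
  exact inner_div_le_dualNorm hm hmle y hξ

lemma dualNorm_pos (hm : 0 < m) (hmle : ∀ ξ, m * ‖ξ‖ ≤ H ξ) {y : 𝔼} (hy : y ≠ 0) :
    0 < dualNorm H y :=
  (div_pos (real_inner_self_pos.mpr hy) (pos_of_mul_norm_le hm hmle hy)).trans_le
    (inner_div_le_dualNorm hm hmle y hy)

lemma dualNorm_add_le [Nontrivial 𝔼] (hm : 0 < m) (hmle : ∀ ξ, m * ‖ξ‖ ≤ H ξ) (y z : 𝔼) :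
    dualNorm H (y + z) ≤ dualNorm H y + dualNorm H z :=
  dualNorm_le fun ξ hξ => by
    rw [inner_add_left, add_div]
    exact add_le_add (inner_div_le_dualNorm hm hmle y hξ) (inner_div_le_dualNorm hm hmle z hξ)

lemma apply_le_one_of_inner_le_dualNorm [Nontrivial 𝔼] (hconv : ConvexOn ℝ Set.univ H)
    (hcont : Continuous H) (hhom : ∀ (a : ℝ) ξ, H (a • ξ) = |a| * H ξ) (hm : 0 < m)
    (hmle : ∀ ξ, m * ‖ξ‖ ≤ H ξ) {ξ : 𝔼} (h : ∀ y, ⟪y, ξ⟫ ≤ dualNorm H y) : H ξ ≤ 1 := by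
  by_contra! hgt
  have hball : Convex ℝ {θ : 𝔼 | H θ ≤ 1} := by simpa using hconv.convex_le 1
  obtain ⟨f, u, hfu, huf⟩ := geometric_hahn_banach_closed_point hball
    (isClosed_le hcont continuous_const) (show ξ ∉ {θ | H θ ≤ 1} from hgt.not_ge)
  set w := (toDual ℝ 𝔼).symm f
  have hw (z : 𝔼) : ⟪w, z⟫ = f z := toDual_symm_apply
  have hwu : dualNorm H w ≤ u := dualNorm_le fun θ hθ => by
    have hHθ : 0 < H θ := pos_of_mul_norm_le hm hmle hθ
    have hmem : (H θ)⁻¹ • θ ∈ {θ : 𝔼 | H θ ≤ 1} := by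
      simp [hhom, abs_of_pos (inv_pos.mpr hHθ), inv_mul_cancel₀ hHθ.ne']
    have := hfu _ hmem
    rw [← hw, real_inner_smul_right] at this
    rw [div_eq_inv_mul]
    exact this.le
  linarith [h w, hw ξ]

lemma inner_gradient_dualNorm_self {x : 𝔼} (hd : DifferentiableAt ℝ (dualNorm H) x) :
    ⟪∇ (dualNorm H) x, x⟫ = dualNorm H x := by
  rw [inner_gradient_left]
  exact fderiv_apply_self_of_forall_pos_smul hd fun t ht => dualNorm_smul_of_nonneg ht.le x

lemma inner_gradient_dualNorm_le [Nontrivial 𝔼] {x : 𝔼} (hm : 0 < m) (hmle : ∀ ξ, m * ‖ξ‖ ≤ H ξ)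
    (hd : DifferentiableAt ℝ (dualNorm H) x) (y : 𝔼) :
    ⟪∇ (dualNorm H) x, y⟫ ≤ dualNorm H y := by
  rw [inner_gradient_left]
  refine fderiv_apply_le_of_forall_pos_le hd fun t ht => ?_
  rw [← dualNorm_smul_of_nonneg ht.le]
  exact dualNorm_add_le hm hmle x (t • y)

lemma apply_gradient_dualNorm [Nontrivial 𝔼] (hconv : ConvexOn ℝ Set.univ H)
    (hcont : Continuous H) (hhom : ∀ (a : ℝ) ξ, H (a • ξ) = |a| * H ξ) (hm : 0 < m)
    (hmle : ∀ ξ, m * ‖ξ‖ ≤ H ξ) {x : 𝔼} (hx : x ≠ 0) (hd : DifferentiableAt ℝ (dualNorm H) x) :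
    H (∇ (dualNorm H) x) = 1 := by
  refine le_antisymm (apply_le_one_of_inner_le_dualNorm hconv hcont hhom hm hmle fun y => ?_) ?_
  · rw [real_inner_comm]
    exact inner_gradient_dualNorm_le hm hmle hd y
  · have := inner_le_dualNorm_mul hhom hm hmle x (∇ (dualNorm H) x)
    rw [real_inner_comm, inner_gradient_dualNorm_self hd] at this
    exact (le_mul_iff_one_le_right (dualNorm_pos hm hmle hx)).mp this

lemma dualNorm_smul_gradient_apply_gradient_dualNorm
    (hhom : ∀ (a : ℝ) ξ, H (a • ξ) = |a| * H ξ) (hm : 0 < m) (hmle : ∀ ξ, m * ‖ξ‖ ≤ H ξ)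
    {x : 𝔼} (hd : DifferentiableAt ℝ (dualNorm H) x) (hH1 : H (∇ (dualNorm H) x) = 1)
    (hdH : DifferentiableAt ℝ H (∇ (dualNorm H) x)) :
    dualNorm H x • ∇ H (∇ (dualNorm H) x) = x :=
  smul_eq_of_hasGradientAt_of_inner_le hdH.hasGradientAt (inner_le_dualNorm_mul hhom hm hmle x)
    (by rw [hH1, mul_one, real_inner_comm, inner_gradient_dualNorm_self hd])

end DualNorm

theorem stmt_8 {N : ℕ} (H : EuclideanSpace ℝ (Fin N) → ℝ)
    (hH0 : ∀ ξ, 0 ≤ H ξ) (hHz : ∀ ξ, H ξ = 0 ↔ ξ = 0)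
    (hconv : ConvexOn ℝ Set.univ H)
    (hhom : ∀ (a : ℝ) ξ, H (a • ξ) = |a| * H ξ)
    (hC1 : ContDiffOn ℝ 1 H {ξ | ξ ≠ 0})
    (hC1dual : ContDiffOn ℝ 1 (dualNorm H) {x | x ≠ 0})
    (vsharp : ℝ → ℝ)
    (hvstar : ContDiff ℝ 2 (fun x : EuclideanSpace ℝ (Fin N) => vsharp ‖x‖))
    (v : EuclideanSpace ℝ (Fin N) → ℝ)
    (hv : ∀ x, v x = vsharp (dualNorm H x)) :
    ∀ x : EuclideanSpace ℝ (Fin N), x ≠ 0 →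
      H (gradient v x) • gradient H (gradient v x)
        = (deriv vsharp (dualNorm H x) / dualNorm H x) • x := by
  intro x hx
  have : Nontrivial (EuclideanSpace ℝ (Fin N)) := ⟨⟨x, 0, hx⟩⟩
  have hcont : Continuous H := continuousOn_univ.mp (hconv.continuousOn isOpen_univ)
  obtain ⟨m, hm, hmle⟩ := exists_pos_mul_norm_le hcont
    (fun ξ hξ => (hH0 ξ).lt_of_ne' (mt (hHz ξ).mp hξ)) hhom
  have hd : DifferentiableAt ℝ (dualNorm H) x :=
    (hC1dual.contDiffAt (isOpen_ne.mem_nhds hx)).differentiableAt one_ne_zero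
  have hr : 0 < dualNorm H x := dualNorm_pos hm hmle hx
  set ξ₀ := ∇ (dualNorm H) x
  have hH1 : H ξ₀ = 1 := apply_gradient_dualNorm hconv hcont hhom hm hmle hx hd
  have hξ₀ : ξ₀ ≠ 0 := fun h => by simp [h, (hHz 0).mpr rfl] at hH1
  have hdH : DifferentiableAt ℝ H ξ₀ :=
    (hC1.contDiffAt (isOpen_ne.mem_nhds hξ₀)).differentiableAt one_ne_zero
  have hgrad_v : ∇ v x = deriv vsharp (dualNorm H x) • ξ₀ := by
    have hvsharp := differentiableAt_of_differentiable_comp_norm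
      (hvstar.differentiable (by norm_num)) hr
    rw [show v = vsharp ∘ dualNorm H from funext hv]
    exact (hvsharp.hasDerivAt.comp_hasGradientAt hd.hasGradientAt).gradient
  have hinv : dualNorm H x • ∇ H ξ₀ = x :=
    dualNorm_smul_gradient_apply_gradient_dualNorm hhom hm hmle hd hH1 hdH
  rw [hgrad_v, apply_smul_gradient_smul hhom hdH, hH1, one_smul]
  calc _ = (deriv vsharp (dualNorm H x) / dualNorm H x) • dualNorm H x • ∇ H ξ₀ := by
        rw [smul_smul, div_mul_cancel₀ _ hr.ne']
    _ = _ := by rw [hinv]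
end

section
/- Let H be a norm on ℝ^N with strictly convex unit ball and C¹ away from 0, and H₀ its dual norm. If v and w are H₀-radially symmetric C²_{H₀}-smooth functions, then for any α, β ∈ ℝ, Δ_H(αv + βw) = αΔ_H v + βΔ_H w in ℝ^N, i.e. the (generally nonlinear) Finsler-Laplace operator acts linearly on H₀-radially symmetric smooth functions. -/
open MeasureTheory Real

/-! Write `ρ = dualNorm H`. For `x ≠ 0` the supremum defining `ρ x` is attained at some `η` with
`H η = 1`. Since `ρ` lies above the linear form `⟪·, η⟫` and touches it at `x`, `∇ρ(x) = η`;
likewise `ξ ↦ |s| ρ(x) H(ξ)` touches `⟪s • x, ·⟫` at `s • η`, which gives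
`H(s η) ∇H(s η) = (s / ρ x) • x`. Hence for `u = φ ∘ ρ` with `φ t = v♯ |t|`, which is even and
`C²` as the restriction of `x ↦ v♯ ‖x‖` to a line, the flux
`H(∇u) ∇H(∇u)` is the field `(φ'(ρ y) / ρ y) • y`, at `y = 0` too, where both vanish. This field is
linear in `φ` and differentiable everywhere (at `0` because `φ'(t) / t → φ''(0)`), so
`Δ_H u`, its divergence, is linear in `φ`. -/

open InnerProductSpace Filter Topology Asymptotics

section Gradient

variable {E : Type*} [NormedAddCommGroup E] [InnerProductSpace ℝ E] [CompleteSpace E]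
  {f g : E → ℝ} {x g' : E}

theorem hasGradientAt_inner_left (a x : E) : HasGradientAt (fun y => inner ℝ a y) a x :=
  hasGradientAt_iff_hasFDerivAt.2 (toDual ℝ E a).hasFDerivAt

theorem HasGradientAt.const_mul (hf : HasGradientAt f g' x) (c : ℝ) :
    HasGradientAt (fun y => c * f y) (c • g') x := by
  rw [hasGradientAt_iff_hasFDerivAt, map_smulₛₗ]
  exact hf.hasFDerivAt.const_mul c

theorem HasDerivAt.comp_hasGradientAt_s10 {φ : ℝ → ℝ} {d : ℝ} (hφ : HasDerivAt φ d (f x))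
    (hf : HasGradientAt f g' x) : HasGradientAt (fun y => φ (f y)) (d • g') x := by
  rw [hasGradientAt_iff_hasFDerivAt, map_smulₛₗ]
  exact hφ.comp_hasFDerivAt x hf.hasFDerivAt

theorem hasGradientAt_of_le_of_eq (hf : DifferentiableAt ℝ f x) (hg : HasGradientAt g g' x)
    (hle : ∀ y, g y ≤ f y) (heq : f x = g x) : HasGradientAt f g' x := by
  have hmin : IsLocalMin (fun y => f y - g y) x :=
    .of_forall fun y => by simp only; linarith [hle y]
  have hzero := hmin.hasFDerivAt_eq_zero (hf.hasFDerivAt.sub hg.hasFDerivAt)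
  rw [hasGradientAt_iff_hasFDerivAt, ← sub_eq_zero.1 hzero]
  exact hf.hasFDerivAt

end Gradient

theorem inner_div_le_of_mul_norm_le {E : Type*} [NormedAddCommGroup E] [InnerProductSpace ℝ E]
    {H : E → ℝ} {m : ℝ} (hm : 0 < m) (hmH : ∀ ξ, m * ‖ξ‖ ≤ H ξ) (x : E) {ξ : E} (hξ : ξ ≠ 0) :
    inner ℝ x ξ / H ξ ≤ m⁻¹ * ‖x‖ := by
  rw [div_le_iff₀ ((mul_pos hm (norm_pos_iff.2 hξ)).trans_le (hmH ξ))]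
  calc inner ℝ x ξ ≤ ‖x‖ * ‖ξ‖ := real_inner_le_norm x ξ
    _ = m⁻¹ * ‖x‖ * (m * ‖ξ‖) := by field_simp
    _ ≤ m⁻¹ * ‖x‖ * H ξ := by gcongr; exact hmH ξ

lemma contDiff_comp_abs_of_contDiff_comp_norm {E : Type*} [NormedAddCommGroup E]
    [NormedSpace ℝ E] [Nontrivial E] {f : ℝ → ℝ} {n : WithTop ℕ∞}
    (hf : ContDiff ℝ n fun x : E => f ‖x‖) : ContDiff ℝ n fun t => f |t| := by
  obtain ⟨x₀, hx₀⟩ := exists_norm_eq E zero_le_one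
  have hline : ContDiff ℝ n fun t : ℝ => t • x₀ := contDiff_id.smul contDiff_const
  simpa [Function.comp_def, norm_smul, hx₀] using hf.comp hline

lemma deriv_zero_of_even {f : ℝ → ℝ} (hf : ∀ t, f (-t) = f t) : deriv f 0 = 0 := by
  have h := deriv_comp_neg f 0
  rw [funext hf, neg_zero] at h
  linarith

section NormLike

variable {E : Type*} [NormedAddCommGroup E] [NormedSpace ℝ E]

structure IsNormLike (H : E → ℝ) : Prop where
  pos : ∀ ξ ≠ 0, 0 < H ξ
  map_smul : ∀ (a : ℝ) ξ, H (a • ξ) = |a| * H ξ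
  continuous : Continuous H

namespace IsNormLike

variable {H : E → ℝ}

lemma map_zero (hH : IsNormLike H) : H 0 = 0 := by
  simpa using hH.map_smul 0 0

lemma exists_pos_mul_norm_le [FiniteDimensional ℝ E] [Nontrivial E] (hH : IsNormLike H) :
    ∃ m > 0, ∀ ξ, m * ‖ξ‖ ≤ H ξ := by
  obtain ⟨ξ₀, hξ₀, hmin⟩ := (isCompact_sphere (0 : E) 1).exists_isMinOn
    (NormedSpace.sphere_nonempty.2 zero_le_one) hH.continuous.continuousOn
  have hξ₀0 : ξ₀ ≠ 0 := ne_zero_of_mem_sphere one_ne_zero ⟨ξ₀, hξ₀⟩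
  refine ⟨H ξ₀, hH.pos ξ₀ hξ₀0, fun ξ => ?_⟩
  rcases eq_or_ne ξ 0 with rfl | hξ
  · simp [hH.map_zero]
  · have hunit : ‖ξ‖⁻¹ • ξ ∈ Metric.sphere (0 : E) 1 := by simp [norm_smul, hξ]
    calc H ξ₀ * ‖ξ‖ ≤ H (‖ξ‖⁻¹ • ξ) * ‖ξ‖ := by gcongr; exact hmin hunit
      _ = H ξ := by rw [hH.map_smul, abs_inv, abs_norm]; field_simp

end IsNormLike

end NormLike

lemma dualNorm_zero {N : ℕ} (H : EuclideanSpace ℝ (Fin N) → ℝ) : dualNorm H 0 = 0 := by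
  simp [dualNorm]

lemma divg_linear_comb {N : ℕ} {F G : EuclideanSpace ℝ (Fin N) → EuclideanSpace ℝ (Fin N)}
    {x : EuclideanSpace ℝ (Fin N)} (hF : DifferentiableAt ℝ F x) (hG : DifferentiableAt ℝ G x)
    (a b : ℝ) : divg (fun y => a • F y + b • G y) x = a * divg F x + b * divg G x := by
  simp only [divg]
  rw [fderiv_fun_add (hF.fun_const_smul a) (hG.fun_const_smul b), fderiv_fun_const_smul hF,
    fderiv_fun_const_smul hG]
  simp only [add_apply, smul_apply, PiLp.add_apply, PiLp.smul_apply, smul_eq_mul,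
    Finset.sum_add_distrib, Finset.mul_sum]

/-- At `y = 0` the junk value `ψ 0 / 0 = 0` makes this `0`, the value of the Finsler flux there. -/
noncomputable def radialField {N : ℕ} (H : EuclideanSpace ℝ (Fin N) → ℝ) (ψ : ℝ → ℝ)
    (y : EuclideanSpace ℝ (Fin N)) : EuclideanSpace ℝ (Fin N) :=
  (ψ (dualNorm H y) / dualNorm H y) • y

lemma radialField_linear_comb {N : ℕ} (H : EuclideanSpace ℝ (Fin N) → ℝ) (ψ χ : ℝ → ℝ)
    (a b : ℝ) : radialField H (fun t => a * ψ t + b * χ t)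
      = fun y => a • radialField H ψ y + b • radialField H χ y := by
  funext y
  simp only [radialField, smul_smul, ← add_smul]
  ring_nf

namespace IsNormLike

variable {N : ℕ} {H : EuclideanSpace ℝ (Fin N) → ℝ} [Nontrivial (EuclideanSpace ℝ (Fin N))]

lemma inner_div_le_dualNorm (hH : IsNormLike H) (x : EuclideanSpace ℝ (Fin N))
    {ξ : EuclideanSpace ℝ (Fin N)} (hξ : ξ ≠ 0) : inner ℝ x ξ / H ξ ≤ dualNorm H x := by
  obtain ⟨m, hm, hmH⟩ := hH.exists_pos_mul_norm_le
  exact le_ciSup (f := fun ξ : {ξ : EuclideanSpace ℝ (Fin N) // ξ ≠ 0} => inner ℝ x ξ.1 / H ξ.1)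
    ⟨m⁻¹ * ‖x‖, by rintro _ ⟨ζ, rfl⟩; exact inner_div_le_of_mul_norm_le hm hmH x ζ.2⟩ ⟨ξ, hξ⟩

lemma inner_le_dualNorm_mul (hH : IsNormLike H) (x ξ : EuclideanSpace ℝ (Fin N)) :
    inner ℝ x ξ ≤ dualNorm H x * H ξ := by
  rcases eq_or_ne ξ 0 with rfl | hξ
  · simp [hH.map_zero]
  · exact (div_le_iff₀ (hH.pos ξ hξ)).1 (hH.inner_div_le_dualNorm x hξ)

lemma dualNorm_pos (hH : IsNormLike H) {x : EuclideanSpace ℝ (Fin N)} (hx : x ≠ 0) :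
    0 < dualNorm H x :=
  (div_pos (real_inner_self_pos.2 hx) (hH.pos x hx)).trans_le (hH.inner_div_le_dualNorm x hx)

lemma dualNorm_nonneg (hH : IsNormLike H) (x : EuclideanSpace ℝ (Fin N)) : 0 ≤ dualNorm H x := by
  rcases eq_or_ne x 0 with rfl | hx
  · exact (dualNorm_zero H).ge
  · exact (hH.dualNorm_pos hx).le

lemma isBigO_dualNorm (hH : IsNormLike H) (l : Filter (EuclideanSpace ℝ (Fin N))) :
    dualNorm H =O[l] fun y => y := by
  obtain ⟨m, hm, hmH⟩ := hH.exists_pos_mul_norm_le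
  refine .of_bound m⁻¹ (.of_forall fun x => ?_)
  rw [Real.norm_of_nonneg (hH.dualNorm_nonneg x)]
  rcases eq_or_ne x 0 with rfl | hx
  · simp [dualNorm_zero]
  · have : Nonempty {ξ : EuclideanSpace ℝ (Fin N) // ξ ≠ 0} := ⟨⟨x, hx⟩⟩
    exact ciSup_le fun ξ => inner_div_le_of_mul_norm_le hm hmH x ξ.2

lemma tendsto_dualNorm_nhdsNE (hH : IsNormLike H) : Tendsto (dualNorm H) (𝓝[≠] 0) (𝓝[≠] 0) :=
  tendsto_nhdsWithin_of_tendsto_nhds_of_eventually_within _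
    (((hH.isBigO_dualNorm _).trans_tendsto tendsto_id).mono_left nhdsWithin_le_nhds)
    (eventually_nhdsWithin_of_forall fun _ hy => (hH.dualNorm_pos hy).ne')

lemma exists_inner_eq_dualNorm (hH : IsNormLike H) {x : EuclideanSpace ℝ (Fin N)} (hx : x ≠ 0) :
    ∃ η, H η = 1 ∧ inner ℝ x η = dualNorm H x := by
  obtain ⟨m, hm, hmH⟩ := hH.exists_pos_mul_norm_le
  have hnormalize : ∀ ξ ≠ 0, H ((H ξ)⁻¹ • ξ) = 1 := fun ξ hξ => by
    rw [hH.map_smul, abs_inv, abs_of_pos (hH.pos ξ hξ), inv_mul_cancel₀ (hH.pos ξ hξ).ne']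
  have hK : IsCompact {ξ | H ξ = 1} := by
    refine Metric.isCompact_of_isClosed_isBounded (isClosed_eq hH.continuous continuous_const) ?_
    exact isBounded_iff_forall_norm_le.2
      ⟨m⁻¹ * 1, fun ξ (hξ : H ξ = 1) => (le_inv_mul_iff₀ hm).2 (hξ ▸ hmH ξ)⟩
  obtain ⟨η, hη, hmax⟩ := hK.exists_isMaxOn ⟨_, hnormalize x hx⟩
    (by fun_prop : Continuous fun ξ : EuclideanSpace ℝ (Fin N) => inner ℝ x ξ).continuousOn
  refine ⟨η, hη, le_antisymm ?_ ?_⟩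
  · have hη0 : η ≠ 0 := fun h => by simp [h, hH.map_zero] at hη
    simpa [show H η = 1 from hη] using hH.inner_div_le_dualNorm x hη0
  · have : Nonempty {ξ : EuclideanSpace ℝ (Fin N) // ξ ≠ 0} := ⟨⟨x, hx⟩⟩
    refine ciSup_le fun ⟨ξ, hξ⟩ => ?_
    simpa [real_inner_smul_right, div_eq_inv_mul] using hmax (hnormalize ξ hξ)

lemma hasGradientAt_dualNorm (hH : IsNormLike H) {x η : EuclideanSpace ℝ (Fin N)}
    (hρ : DifferentiableAt ℝ (dualNorm H) x) (hη : H η = 1)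
    (hxη : inner ℝ x η = dualNorm H x) : HasGradientAt (dualNorm H) η x := by
  refine hasGradientAt_of_le_of_eq hρ (g := fun y => inner ℝ y η) ?_ (fun y => ?_) hxη.symm
  · simpa only [real_inner_comm] using hasGradientAt_inner_left η x
  · simpa [hη] using hH.inner_le_dualNorm_mul y η

/-- `ξ ↦ |s| ρ(x) H(ξ)` lies above the linear form `⟪s • x, ·⟫` and touches it at `s • η`. -/
lemma hasGradientAt_smul (hH : IsNormLike H) {x η : EuclideanSpace ℝ (Fin N)} {s : ℝ}
    (hx : x ≠ 0) (hs : s ≠ 0) (hHd : DifferentiableAt ℝ H (s • η)) (hη : H η = 1)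
    (hxη : inner ℝ x η = dualNorm H x) :
    HasGradientAt H ((|s| * dualNorm H x)⁻¹ • s • x) (s • η) := by
  set c := |s| * dualNorm H x
  have hc : c ≠ 0 := mul_ne_zero (abs_ne_zero.2 hs) (hH.dualNorm_pos hx).ne'
  have htouch : HasGradientAt (fun ξ => c * H ξ) (s • x) (s • η) := by
    refine hasGradientAt_of_le_of_eq (hHd.const_mul c) (hasGradientAt_inner_left _ _)
      (fun ξ => ?_) ?_
    · calc inner ℝ (s • x) ξ = inner ℝ x (s • ξ) := by
            rw [real_inner_smul_left, real_inner_smul_right]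
        _ ≤ dualNorm H x * H (s • ξ) := hH.inner_le_dualNorm_mul x _
        _ = c * H ξ := by rw [hH.map_smul]; ring
    · rw [hH.map_smul, hη, real_inner_smul_left, real_inner_smul_right, hxη]
      linear_combination dualNorm H x * abs_mul_abs_self s
  simpa only [← mul_assoc, inv_mul_cancel₀ hc, one_mul] using htouch.const_mul c⁻¹

lemma smul_gradient_smul_eq (hH : IsNormLike H) (hHd : DifferentiableOn ℝ H {ξ | ξ ≠ 0})
    {x η : EuclideanSpace ℝ (Fin N)} (hx : x ≠ 0) (hη : H η = 1)
    (hxη : inner ℝ x η = dualNorm H x) (s : ℝ) :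
    H (s • η) • gradient H (s • η) = (s / dualNorm H x) • x := by
  rcases eq_or_ne s 0 with rfl | hs
  · simp [hH.map_zero]
  have hsη : s • η ≠ 0 := smul_ne_zero hs fun h => by simp [h, hH.map_zero] at hη
  rw [(hH.hasGradientAt_smul hx hs (hHd.differentiableAt (isOpen_ne.mem_nhds hsη)) hη
    hxη).gradient, hH.map_smul, hη, smul_smul, smul_smul]
  have := (hH.dualNorm_pos hx).ne'
  field_simp

lemma hasGradientAt_comp_dualNorm_zero (hH : IsNormLike H) {φ : ℝ → ℝ}
    (hφ : HasDerivAt φ 0 0) : HasGradientAt (fun y => φ (dualNorm H y)) 0 0 := by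
  have hρ := hH.isBigO_dualNorm (𝓝 0)
  have hφo : (fun t => φ t - φ 0) =o[𝓝 0] fun t => t := by
    simpa using hasDerivAt_iff_isLittleO_nhds_zero.1 hφ
  rw [hasGradientAt_iff_isLittleO_nhds_zero]
  simpa [Function.comp_def, dualNorm_zero] using
    (hφo.comp_tendsto (hρ.trans_tendsto tendsto_id)).trans_isBigO hρ

lemma finslerLap_comp_dualNorm (hH : IsNormLike H) (hHd : DifferentiableOn ℝ H {ξ | ξ ≠ 0})
    (hρ : DifferentiableOn ℝ (dualNorm H) {x | x ≠ 0}) {φ : ℝ → ℝ} (hφ : Differentiable ℝ φ)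
    (hφ0 : deriv φ 0 = 0) {u : EuclideanSpace ℝ (Fin N) → ℝ}
    (hu : ∀ y, u y = φ (dualNorm H y)) : finslerLap H u = divg (radialField H (deriv φ)) := by
  obtain rfl : u = _ := funext hu
  funext x
  unfold finslerLap
  congr 1
  funext y
  rcases eq_or_ne y 0 with rfl | hy
  · have h0 := hH.hasGradientAt_comp_dualNorm_zero (hφ0 ▸ (hφ 0).hasDerivAt)
    simp [h0.gradient, hH.map_zero, radialField]
  · obtain ⟨η, hη, hyη⟩ := hH.exists_inner_eq_dualNorm hy
    have hgrad := (hφ _).hasDerivAt.comp_hasGradientAt_s10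
      (hH.hasGradientAt_dualNorm (hρ.differentiableAt (isOpen_ne.mem_nhds hy)) hη hyη)
    rw [hgrad.gradient, hH.smul_gradient_smul_eq hHd hy hη hyη]
    rfl

lemma finslerLap_eq_divg_radialField (hH : IsNormLike H)
    (hHd : DifferentiableOn ℝ H {ξ | ξ ≠ 0}) (hρ : DifferentiableOn ℝ (dualNorm H) {x | x ≠ 0})
    {f : ℝ → ℝ} (hf : ContDiff ℝ 2 fun x : EuclideanSpace ℝ (Fin N) => f ‖x‖)
    {u : EuclideanSpace ℝ (Fin N) → ℝ} (hu : ∀ y, u y = f (dualNorm H y)) :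
    finslerLap H u = divg (radialField H (deriv fun t => f |t|)) :=
  hH.finslerLap_comp_dualNorm hHd hρ
    ((contDiff_comp_abs_of_contDiff_comp_norm hf).differentiable two_ne_zero)
    (deriv_zero_of_even fun t => by rw [abs_neg])
    fun y => by rw [hu, abs_of_nonneg (hH.dualNorm_nonneg y)]

lemma hasFDerivAt_radialField_zero (hH : IsNormLike H) {ψ : ℝ → ℝ} {d : ℝ}
    (hψ : HasDerivAt ψ d 0) (hψ0 : ψ 0 = 0) :
    HasFDerivAt (radialField H ψ) (d • ContinuousLinearMap.id ℝ _) 0 := by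
  have hslope : Tendsto (fun y => ψ (dualNorm H y) / dualNorm H y - d) (𝓝[≠] 0) (𝓝 0) := by
    have := ((hasDerivAt_iff_tendsto_slope.1 hψ).comp hH.tendsto_dualNorm_nhdsNE).sub_const d
    simpa [Function.comp_def, slope_def_field, hψ0] using this
  have hne : (fun y => (ψ (dualNorm H y) / dualNorm H y - d) • y) =o[𝓝[≠] 0] fun y => y := by
    simpa using ((isLittleO_one_iff ℝ).2 hslope).smul_isBigO (isBigO_refl (fun y => y) _)
  rw [hasFDerivAt_iff_isLittleO_nhds_zero, ← nhdsNE_sup_pure]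
  refine (hne.sup (isLittleO_pure.2 (by simp))).congr_left fun y => ?_
  simp [radialField, sub_smul]

lemma differentiableAt_radialField (hH : IsNormLike H)
    (hρ : DifferentiableOn ℝ (dualNorm H) {x | x ≠ 0}) {ψ : ℝ → ℝ} (hψ : Differentiable ℝ ψ)
    (hψ0 : ψ 0 = 0) (x : EuclideanSpace ℝ (Fin N)) : DifferentiableAt ℝ (radialField H ψ) x := by
  rcases eq_or_ne x 0 with rfl | hx
  · exact (hH.hasFDerivAt_radialField_zero (hψ 0).hasDerivAt hψ0).differentiableAt
  · have hρx := hρ.differentiableAt (isOpen_ne.mem_nhds hx)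
    unfold radialField
    simp only [div_eq_mul_inv]
    exact (((hψ _).comp x hρx).mul (hρx.inv (hH.dualNorm_pos hx).ne')).smul differentiableAt_id

lemma differentiableAt_radialField_deriv_comp_abs (hH : IsNormLike H)
    (hρ : DifferentiableOn ℝ (dualNorm H) {x | x ≠ 0}) {f : ℝ → ℝ}
    (hf : ContDiff ℝ 2 fun x : EuclideanSpace ℝ (Fin N) => f ‖x‖) (x : EuclideanSpace ℝ (Fin N)) :
    DifferentiableAt ℝ (radialField H (deriv fun t => f |t|)) x :=
  hH.differentiableAt_radialField hρ
    (contDiff_comp_abs_of_contDiff_comp_norm hf).differentiable_deriv_two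
    (deriv_zero_of_even fun t => by rw [abs_neg]) x

end IsNormLike

theorem stmt_10 {N : ℕ} (H : EuclideanSpace ℝ (Fin N) → ℝ)
    (hH0 : ∀ ξ, 0 ≤ H ξ) (hHz : ∀ ξ, H ξ = 0 ↔ ξ = 0)
    (hconv : ConvexOn ℝ Set.univ H)
    (hhom : ∀ (a : ℝ) ξ, H (a • ξ) = |a| * H ξ)
    (hC1 : ContDiffOn ℝ 1 H {ξ | ξ ≠ 0})
    (hC1dual : ContDiffOn ℝ 1 (dualNorm H) {x | x ≠ 0})
    (vsharp wsharp : ℝ → ℝ)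
    (hvstar : ContDiff ℝ 2 (fun x : EuclideanSpace ℝ (Fin N) => vsharp ‖x‖))
    (hwstar : ContDiff ℝ 2 (fun x : EuclideanSpace ℝ (Fin N) => wsharp ‖x‖))
    (v w : EuclideanSpace ℝ (Fin N) → ℝ)
    (hv : ∀ x, v x = vsharp (dualNorm H x))
    (hw : ∀ x, w x = wsharp (dualNorm H x)) :
    ∀ (α β : ℝ) (x : EuclideanSpace ℝ (Fin N)),
      finslerLap H (fun y => α * v y + β * w y) x
        = α * finslerLap H v x + β * finslerLap H w x := by
  intro α β x
  rcases subsingleton_or_nontrivial (EuclideanSpace ℝ (Fin N)) with hE | hE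
  · simp [finslerLap, divg, Subsingleton.elim _ (0 : EuclideanSpace ℝ (Fin N))]
  have hH : IsNormLike H := ⟨fun ξ hξ => (hH0 ξ).lt_of_ne' ((hHz ξ).not.2 hξ), hhom,
    continuousOn_univ.1 (hconv.continuousOn isOpen_univ)⟩
  have hHd := hC1.differentiableOn one_ne_zero
  have hρ := hC1dual.differentiableOn one_ne_zero
  have hφv := (contDiff_comp_abs_of_contDiff_comp_norm hvstar).differentiable two_ne_zero
  have hφw := (contDiff_comp_abs_of_contDiff_comp_norm hwstar).differentiable two_ne_zero
  have hderiv : deriv (fun t => α * vsharp |t| + β * wsharp |t|)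
      = fun t => α * deriv (fun t => vsharp |t|) t + β * deriv (fun t => wsharp |t|) t :=
    funext fun t => (((hφv t).hasDerivAt.const_mul α).add ((hφw t).hasDerivAt.const_mul β)).deriv
  rw [hH.finslerLap_eq_divg_radialField hHd hρ (f := fun t => α * vsharp t + β * wsharp t)
      ((contDiff_const.mul hvstar).add (contDiff_const.mul hwstar)) fun y => by rw [hv, hw],
    hH.finslerLap_eq_divg_radialField hHd hρ hvstar hv,
    hH.finslerLap_eq_divg_radialField hHd hρ hwstar hw, hderiv, radialField_linear_comb]
  exact divg_linear_comb (hH.differentiableAt_radialField_deriv_comp_abs hρ hvstar x)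
    (hH.differentiableAt_radialField_deriv_comp_abs hρ hwstar x) α β
end
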